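/- The quotient of the set of unbounded subsets of a metric space X by linear equivalence, equipped with the induced metric t, is a complete metric space. -/

import Mathlib

open Metric Set Bornology Filter

def cone {X : Type*} [MetricSpace X] (o : X) (R : Set X) (α a : ℝ) : Set X :=
  ⋃ x ∈ R, Metric.closedBall x (α * dist o x + a)

noncomputable def sPlus {X : Type*} [MetricSpace X] (o : X) (R S : Set X) : ℝ :=
  sInf {α : ℝ | 0 ≤ α ∧ ∃ a : ℝ, 0 ≤ a ∧ S ⊆ cone o R α a}

noncomputable def sFun {X : Type*} [MetricSpace X] (o : X) (R S : Set X) : ℝ :=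
  max (sPlus o R S) (sPlus o S R)

noncomputable def tFun {X : Type*} [MetricSpace X] (o : X) (R S : Set X) : ℝ :=
  Real.sqrt (sFun o R S)

section Aux
variable {X : Type*} [MetricSpace X] (o : X)

lemma mem_cone_iff {R : Set X} {α a : ℝ} {y : X} :
    y ∈ cone o R α a ↔ ∃ x ∈ R, dist y x ≤ α * dist o x + a := by
  simp [cone, Metric.mem_closedBall]

lemma cone_mono {R : Set X} {α α' a a' : ℝ} (hα : α ≤ α') (ha : a ≤ a') :
    cone o R α a ⊆ cone o R α' a' := by
  intro y hy
  rw [mem_cone_iff] at hy ⊢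
  obtain ⟨x, hx, hd⟩ := hy
  refine ⟨x, hx, hd.trans ?_⟩
  have := dist_nonneg (x := o) (y := x)
  nlinarith

lemma exists_far {R : Set X} (hR : ¬ Bornology.IsBounded R) (ρ : ℝ) :
    ∃ x ∈ R, ρ < dist o x := by
  by_contra h
  push_neg at h
  exact hR ((Metric.isBounded_closedBall (x := o) (r := ρ)).subset
    (fun x hx => by simpa [Metric.mem_closedBall, dist_comm] using h x hx))

lemma subset_cone_two {R : Set X} (hR : ¬ Bornology.IsBounded R) (S : Set X) :
    S ⊆ cone o R 2 0 := by
  intro s _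
  obtain ⟨x, hx, hd⟩ := exists_far o hR (dist o s)
  rw [mem_cone_iff]
  refine ⟨x, hx, ?_⟩
  have h1 := dist_triangle s o x
  have h2 : dist s o = dist o s := dist_comm _ _
  nlinarith

lemma sPlus_nonneg (R S : Set X) : 0 ≤ sPlus o R S :=
  Real.sInf_nonneg fun α hα => hα.1

lemma sPlus_le {R S : Set X} {α a : ℝ} (hα : 0 ≤ α) (ha : 0 ≤ a)
    (h : S ⊆ cone o R α a) : sPlus o R S ≤ α :=
  csInf_le ⟨0, fun β hβ => hβ.1⟩ ⟨hα, a, ha, h⟩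

lemma exists_cover {R S : Set X} (hR : ¬ Bornology.IsBounded R) {c : ℝ}
    (hc : sPlus o R S < c) : ∃ a, 0 ≤ a ∧ S ⊆ cone o R c a := by
  have hne : {α : ℝ | 0 ≤ α ∧ ∃ a, 0 ≤ a ∧ S ⊆ cone o R α a}.Nonempty :=
    ⟨2, by norm_num, 0, le_refl 0, subset_cone_two o hR S⟩
  obtain ⟨α, hα, hαc⟩ := exists_lt_of_csInf_lt hne hc
  obtain ⟨hα0, a, ha0, hsub⟩ := hα
  exact ⟨a, ha0, hsub.trans (cone_mono o hαc.le le_rfl)⟩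

lemma cone_comp {A B C : Set X} {α a β b : ℝ} (hβ : 0 ≤ β)
    (h1 : B ⊆ cone o A α a) (h2 : C ⊆ cone o B β b) :
    C ⊆ cone o A (α + β + α * β) (a * (1 + β) + b) := by
  intro y hy
  obtain ⟨x, hxB, hyx⟩ := (mem_cone_iff o).1 (h2 hy)
  obtain ⟨z, hzA, hxz⟩ := (mem_cone_iff o).1 (h1 hxB)
  rw [mem_cone_iff]
  refine ⟨z, hzA, ?_⟩
  have ht : dist y z ≤ dist y x + dist x z := dist_triangle y x z
  have hox : dist o x ≤ dist o z + dist z x := dist_triangle o z x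
  have hc : dist z x = dist x z := dist_comm _ _
  nlinarith

/-- recursive radii -/
noncomputable def rSeq (C : ℕ → ℝ) (D : ℕ → ℝ → ℝ) : ℕ → ℝ
  | 0 => max 1 (C 0)
  | (k+1) => max (max (rSeq C D k + 1) (C (k+1))) (D k (rSeq C D k))

end Aux
set_option maxHeartbeats 1000000 in
/-- Completeness of the Kolmogorov quotient of the space of unbounded subsets,
stated via representatives: every `t`-Cauchy sequence of unbounded sets converges
(in the pseudometric `t`) to some unbounded set. -/
theorem stmt8 {X : Type*} [MetricSpace X] (o : X) (R : ℕ → Set X)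
    (hR : ∀ n, ¬ Bornology.IsBounded (R n))
    (hCauchy : ∀ ε : ℝ, 0 < ε → ∃ N : ℕ, ∀ m n : ℕ, N ≤ m → N ≤ n →
      tFun o (R m) (R n) < ε) :
    ∃ S : Set X, ¬ Bornology.IsBounded S ∧
      Filter.Tendsto (fun n => tFun o (R n) S) Filter.atTop (nhds 0) := by
  classical
  -- q j = (1/4)^(j+1)
  set q : ℕ → ℝ := fun j => (1/4 : ℝ) ^ (j+1) with hq_def
  have hqpos : ∀ j, 0 < q j := fun j => pow_pos (by norm_num) _
  have hq_le : ∀ j, q j ≤ 1/4 := by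
    intro j
    calc q j ≤ (1/4:ℝ)^1 := pow_le_pow_of_le_one (by norm_num) (by norm_num) (by omega)
    _ = 1/4 := pow_one _
  have hq_mono : ∀ j k, j ≤ k → q k ≤ q j := fun j k h =>
    pow_le_pow_of_le_one (by norm_num) (by norm_num) (by omega)
  have hq4 : ∀ j, (1/4:ℝ)^j = 4 * q j := by
    intro j; simp only [hq_def]; rw [pow_succ]; ring
  have hq'pos : ∀ j : ℕ, (0:ℝ) < (1/4:ℝ)^j := fun j => by positivity
  -- Cauchy in terms of sFun
  have hNex : ∀ j : ℕ, ∃ N, ∀ m m', N ≤ m → N ≤ m' → sFun o (R m) (R m') < q j := by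
    intro j
    obtain ⟨N, hN⟩ := hCauchy ((1/2:ℝ)^(j+1)) (by positivity)
    refine ⟨N, fun m m' hm hm' => ?_⟩
    have h1 := hN m m' hm hm'
    have h0 : 0 ≤ sFun o (R m) (R m') :=
      le_trans (sPlus_nonneg o _ _) (le_max_left _ _)
    have heq : sFun o (R m) (R m') = (tFun o (R m) (R m'))^2 := (Real.sq_sqrt h0).symm
    have ht0 : 0 ≤ tFun o (R m) (R m') := Real.sqrt_nonneg _
    have h2 : (tFun o (R m) (R m'))^2 < ((1/2:ℝ)^(j+1))^2 := by nlinarith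
    rw [heq]
    calc (tFun o (R m) (R m'))^2 < ((1/2:ℝ)^(j+1))^2 := h2
      _ = q j := by rw [hq_def]; rw [← pow_mul, mul_comm, pow_mul]; norm_num
  choose N hN using hNex
  -- monotone subsequence indices
  set n : ℕ → ℕ := fun j => (Finset.range (j+1)).sup N with hn_def
  have hnmono : Monotone n := fun i j hij =>
    Finset.sup_mono (Finset.range_subset_range.2 (by omega))
  have hnN : ∀ j, N j ≤ n j := fun j =>
    Finset.le_sup (Finset.mem_range.2 (by omega))
  have key : ∀ j m, n j ≤ m → sFun o (R (n j)) (R m) < q j :=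
    fun j m hm => hN j (n j) m (hnN j) (le_trans (hnN j) hm)
  -- coverings between subsequence elements
  have hex' : ∀ j k : ℕ, ∃ a : ℝ, 0 ≤ a ∧ (j ≤ k →
      (R (n k) ⊆ cone o (R (n j)) (q j) a ∧ R (n j) ⊆ cone o (R (n k)) (q j) a)) := by
    intro j k
    by_cases h : j ≤ k
    · have hs := key j (n k) (hnmono h)
      have h1 : sPlus o (R (n j)) (R (n k)) < q j := lt_of_le_of_lt (le_max_left _ _) hs
      have h2 : sPlus o (R (n k)) (R (n j)) < q j := lt_of_le_of_lt (le_max_right _ _) hs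
      obtain ⟨a1, ha1, hc1⟩ := exists_cover o (hR _) h1
      obtain ⟨a2, ha2, hc2⟩ := exists_cover o (hR _) h2
      exact ⟨max a1 a2, le_trans ha1 (le_max_left _ _), fun _ =>
        ⟨hc1.trans (cone_mono o le_rfl (le_max_left _ _)),
         hc2.trans (cone_mono o le_rfl (le_max_right _ _))⟩⟩
    · exact ⟨0, le_rfl, fun hjk => absurd hjk h⟩
  choose A hA0 hAcov using hex'
  -- picking far points
  have hpickex : ∀ (k : ℕ) (ρ : ℝ), ∃ x, x ∈ R (n k) ∧ ρ < dist o x := by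
    intro k ρ
    obtain ⟨x, hx, hd⟩ := exists_far o (hR (n k)) ρ
    exact ⟨x, hx, hd⟩
  choose pick hpick1 hpick2 using hpickex
  -- constants and radii
  set C : ℕ → ℝ := fun k => 4 * 4^(k+1) * (∑ j ∈ Finset.range (k+1), (A j k + 1)) with hC_def
  have hCA : ∀ j k, j ≤ k → 4 * 4^(k+1) * (A j k + 1) ≤ C k := by
    intro j k hjk
    have hsum : A j k + 1 ≤ ∑ i ∈ Finset.range (k+1), (A i k + 1) :=
      Finset.single_le_sum (f := fun i => A i k + 1)
        (fun i _ => by linarith [hA0 i k]) (Finset.mem_range.2 (by omega))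
    have h4 : (0:ℝ) ≤ 4 * 4^(k+1) := by positivity
    rw [hC_def]
    exact mul_le_mul_of_nonneg_left hsum h4
  set r : ℕ → ℝ := rSeq C (fun k ρ => dist o (pick k ρ)) with hr_def
  have hr0 : r 0 = max 1 (C 0) := rfl
  have hrsucc : ∀ k, r (k+1) = max (max (r k + 1) (C (k+1))) (dist o (pick k (r k))) :=
    fun k => rfl
  have hrC : ∀ k, C k ≤ r k := by
    intro k
    cases k with
    | zero => rw [hr0]; exact le_max_right _ _
    | succ k => rw [hrsucc]; exact le_trans (le_max_right _ _) (le_max_left _ _)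
  have hrstep : ∀ k, r k + 1 ≤ r (k+1) := by
    intro k
    rw [hrsucc]
    exact le_trans (le_max_left _ _) (le_max_left _ _)
  have hr1 : ∀ k, 1 ≤ r k := by
    intro k
    induction k with
    | zero => rw [hr0]; exact le_max_left _ _
    | succ k ih => linarith [hrstep k]
  have hrk : ∀ k : ℕ, (k : ℝ) + 1 ≤ r k := by
    intro k
    induction k with
    | zero => simpa using hr1 0
    | succ k ih => push_cast; linarith [hrstep k]
  have hrpos : ∀ k, 0 < r k := fun k => lt_of_lt_of_le one_pos (hr1 k)
  have hrmono : ∀ j k, j ≤ k → r j ≤ r k := by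
    intro j k hjk
    induction k with
    | zero =>
      have hj0 : j = 0 := by omega
      rw [hj0]
    | succ k ih =>
      rcases Nat.lt_or_ge j (k+1) with h | h
      · have := ih (by omega); linarith [hrstep k]
      · have hj : j = k+1 := by omega
        rw [hj]
  have hrpk : ∀ k, dist o (pick k (r k)) ≤ r (k+1) := by
    intro k; rw [hrsucc]; exact le_max_right _ _
  -- absorption of additive constants
  have hAsmall : ∀ j k, j ≤ k → ∀ d : ℝ, r k / 4 ≤ d → A j k ≤ q k * d := by
    intro j k hjk d hd
    have h1 := hCA j k hjk
    have h2 := hrC k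
    have hmul : q k * 4^(k+1) = 1 := by
      simp only [hq_def]; rw [← mul_pow]; norm_num
    have hqk := hqpos k
    have h5 : (4:ℝ)^(k+1) * (A j k + 1) ≤ d := by linarith
    have h6 : q k * ((4:ℝ)^(k+1) * (A j k + 1)) ≤ q k * d :=
      mul_le_mul_of_nonneg_left h5 hqk.le
    have h7 : q k * ((4:ℝ)^(k+1) * (A j k + 1)) = A j k + 1 := by
      rw [← mul_assoc, hmul]; ring
    linarith
  -- the limit set S
  set S : Set X := ⋃ k, (R (n k) ∩ {x | r k / 4 ≤ dist o x ∧ dist o x ≤ 2 * r (k+1)})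
    with hS_def
  have hmemS : ∀ k x, x ∈ R (n k) → r k / 4 ≤ dist o x → dist o x ≤ 2 * r (k+1) → x ∈ S := by
    intro k x h1 h2 h3
    rw [hS_def]
    exact Set.mem_iUnion.2 ⟨k, h1, h2, h3⟩
  have hxkS : ∀ k, pick k (r k) ∈ S := by
    intro k
    refine hmemS k _ (hpick1 k (r k)) ?_ ?_
    · linarith [hpick2 k (r k), hrpos k]
    · linarith [hrpk k, hrpos (k+1), hrstep k, hrpos k]
  -- S is unbounded
  have hSunb : ¬ Bornology.IsBounded S := by
    intro hb
    obtain ⟨M, hM⟩ := (Metric.isBounded_iff_subset_closedBall o).1 hb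
    set k := ⌈M⌉₊ with hk
    have h1 : dist (pick k (r k)) o ≤ M := by
      simpa [Metric.mem_closedBall] using hM (hxkS k)
    have h2 : M ≤ (k : ℝ) := Nat.le_ceil M
    have h3 := hrk k
    have h4 := hpick2 k (r k)
    rw [dist_comm] at h1
    linarith
  refine ⟨S, hSunb, ?_⟩
  -- Direction 1: S ⊆ cone (R (n j))
  have hD1 : ∀ j, S ⊆ cone o (R (n j)) (2*(1/4:ℝ)^j) (2 * r j + dist o (pick j 0)) := by
    intro j x hx
    rw [hS_def] at hx
    obtain ⟨k, hxR, hxlo, hxhi⟩ := Set.mem_iUnion.1 hx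
    have ha0 : (0:ℝ) ≤ 2 * r j + dist o (pick j 0) := by
      have := hrpos j; have h2 : (0:ℝ) ≤ dist o (pick j 0) := dist_nonneg; linarith
    rcases le_or_gt j k with hjk | hkj
    · -- far piece: use the covering
      obtain ⟨y, hyR, hyd⟩ := (mem_cone_iff o).1 ((hAcov j k hjk).1 hxR)
      have hA := hAsmall j k hjk (dist o x) hxlo
      have hqk : q k ≤ q j := hq_mono j k hjk
      have hqj : q j ≤ 1/4 := hq_le j
      have hqk0 := hqpos k
      have hdxy0 : (0:ℝ) ≤ dist x y := dist_nonneg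
      have hdoy0 : (0:ℝ) ≤ dist o y := dist_nonneg
      have htri : dist o x ≤ dist o y + dist x y := by
        have h := dist_triangle o y x
        rw [dist_comm y x] at h
        exact h
      have hq1 : q k * dist o x ≤ q k * (dist o y + dist x y) :=
        mul_le_mul_of_nonneg_left htri hqk0.le
      have hstep : dist x y ≤ q j * dist o y + q k * dist o y + q k * dist x y := by
        have : q k * (dist o y + dist x y) = q k * dist o y + q k * dist x y := by ring
        linarith [hyd, hA, hq1, this]
      rw [mem_cone_iff]
      refine ⟨y, hyR, ?_⟩
      rw [hq4 j]
      have hint1 : (0:ℝ) ≤ (1/4 - q k) * dist x y :=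
        mul_nonneg (by linarith) hdxy0
      have hint2 : (0:ℝ) ≤ (q j - q k) * dist o y :=
        mul_nonneg (by linarith) hdoy0
      have hint3 : (0:ℝ) ≤ q j * dist o y := mul_nonneg (hqpos j).le hdoy0
      nlinarith [hstep, hint1, hint2, hint3]
    · -- near piece: absorbed in additive constant
      have hle : r (k+1) ≤ r j := hrmono _ _ hkj
      rw [mem_cone_iff]
      refine ⟨pick j 0, hpick1 j 0, ?_⟩
      have htri : dist x (pick j 0) ≤ dist x o + dist o (pick j 0) := dist_triangle _ _ _
      have hc : dist x o = dist o x := dist_comm _ _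
      have hp : (0:ℝ) ≤ 2*(1/4:ℝ)^j * dist o (pick j 0) := by positivity
      nlinarith
  -- Direction 2: R (n j) ⊆ cone S
  have hD2 : ∀ j, R (n j) ⊆ cone o S (2*(1/4:ℝ)^j) (r j + dist o (pick 0 (r 0))) := by
    intro j x hx
    have hs0 : pick 0 (r 0) ∈ S := hxkS 0
    by_cases hd : dist o x ≤ r j
    · rw [mem_cone_iff]
      refine ⟨pick 0 (r 0), hs0, ?_⟩
      have htri : dist x (pick 0 (r 0)) ≤ dist x o + dist o (pick 0 (r 0)) := dist_triangle _ _ _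
      have hc : dist x o = dist o x := dist_comm _ _
      have hp : (0:ℝ) ≤ 2*(1/4:ℝ)^j * dist o (pick 0 (r 0)) := by positivity
      nlinarith
    · push_neg at hd
      -- find the annulus containing x
      have hexm : ∃ m, dist o x ≤ r (m+1) := by
        refine ⟨⌈dist o x⌉₊, ?_⟩
        have h1 : dist o x ≤ (⌈dist o x⌉₊ : ℝ) := Nat.le_ceil _
        have h2 := hrk (⌈dist o x⌉₊ + 1)
        push_cast at h2
        linarith
      obtain ⟨k, hk1, hkmin⟩ : ∃ k, dist o x ≤ r (k+1) ∧ ∀ i, i < k → ¬ dist o x ≤ r (i+1) :=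
        ⟨Nat.find hexm, Nat.find_spec hexm, fun i hi => Nat.find_min hexm hi⟩
      have hjk : j ≤ k := by
        by_contra hc
        push_neg at hc
        have : r (k+1) ≤ r j := hrmono _ _ (by omega)
        linarith
      have hk2 : r k < dist o x := by
        cases k with
        | zero =>
          have : r 0 ≤ r j := hrmono 0 j (by omega)
          linarith
        | succ k' =>
          have := hkmin k' (by omega)
          push_neg at this
          exact this
      obtain ⟨y, hyR, hyd⟩ := (mem_cone_iff o).1 ((hAcov j k hjk).2 hx)
      have hA := hAsmall j k hjk (dist o x) (by linarith [hrpos k])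
      have hqk : q k ≤ q j := hq_mono j k hjk
      have hqj : q j ≤ 1/4 := hq_le j
      have hqj0 := hqpos j
      have hdxy0 : (0:ℝ) ≤ dist x y := dist_nonneg
      have hdoy0 : (0:ℝ) ≤ dist o y := dist_nonneg
      have hdox0 : (0:ℝ) ≤ dist o x := dist_nonneg
      have htri2 : dist o y ≤ dist o x + dist x y := dist_triangle o x y
      have htri : dist o x ≤ dist o y + dist x y := by
        have h := dist_triangle o y x
        rw [dist_comm y x] at h
        exact h
      have hq1 : q j * dist o y ≤ q j * (dist o x + dist x y) :=
        mul_le_mul_of_nonneg_left htri2 hqj0.le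
      have hstep : dist x y ≤ q j * dist o x + q j * dist x y + q k * dist o x := by
        have : q j * (dist o x + dist x y) = q j * dist o x + q j * dist x y := by ring
        linarith [hyd, hA, hq1, this]
      -- dist x y ≤ (2/3) dist o x
      have hint1 : (0:ℝ) ≤ (1/4 - q j) * dist x y := mul_nonneg (by linarith) hdxy0
      have hint2 : (0:ℝ) ≤ (1/4 - q j) * dist o x := mul_nonneg (by linarith) hdox0
      have hint3 : (0:ℝ) ≤ (1/4 - q k) * dist o x :=
        mul_nonneg (by linarith [hq_le k]) hdox0
      have hsmall : dist x y ≤ 2/3 * dist o x := by nlinarith [hstep, hint1, hint2, hint3]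
      have hylow : dist o x / 3 ≤ dist o y := by linarith
      have hyS : y ∈ S := by
        refine hmemS k y hyR ?_ ?_
        · linarith [hrpos k]
        · linarith [hrpos (k+1)]
      rw [mem_cone_iff]
      refine ⟨y, hyS, ?_⟩
      rw [hq4 j]
      have hp0 : (0:ℝ) ≤ r j + dist o (pick 0 (r 0)) := by
        have := hrpos j; have h2 : (0:ℝ) ≤ dist o (pick 0 (r 0)) := dist_nonneg; linarith
      have hint4 : (0:ℝ) ≤ (q j - q k) * dist o x := mul_nonneg (by linarith) hdox0
      have hint5 : q j * dist o x ≤ q j * (3 * dist o y) :=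
        mul_le_mul_of_nonneg_left (by linarith) hqj0.le
      nlinarith [hstep, hint1, hint4, hint5]
  -- additive constants are nonnegative
  have ha1 : ∀ j, (0:ℝ) ≤ 2 * r j + dist o (pick j 0) := by
    intro j; have := hrpos j; have h2 : (0:ℝ) ≤ dist o (pick j 0) := dist_nonneg; linarith
  have ha2 : (0:ℝ) ≤ dist o (pick 0 (r 0)) := dist_nonneg
  -- main estimate for the full sequence
  have hmain : ∀ j m, n j ≤ m → sFun o (R m) S ≤ 5 * (1/4:ℝ)^j := by
    intro j m hm
    have hs := key j m hm
    have h1 : sPlus o (R (n j)) (R m) < q j := lt_of_le_of_lt (le_max_left _ _) hs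
    have h2 : sPlus o (R m) (R (n j)) < q j := lt_of_le_of_lt (le_max_right _ _) hs
    obtain ⟨a3, ha3, hc3⟩ := exists_cover o (hR (n j)) h1
    obtain ⟨a4, ha4, hc4⟩ := exists_cover o (hR m) h2
    have hqj := (hqpos j).le
    have hq'j := (hq'pos j).le
    have hqle : q j ≤ (1/4:ℝ)^j := by
      rw [hq4 j]; nlinarith [hqpos j]
    have hqle1 : q j ≤ 1 := le_trans (hq_le j) (by norm_num)
    -- S ⊆ cone (R m)
    have hcomp1 := cone_comp o (show (0:ℝ) ≤ 2*(1/4:ℝ)^j by positivity) hc4 (hD1 j)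
    have hb1 : sPlus o (R m) S ≤ q j + 2*(1/4:ℝ)^j + q j * (2*(1/4:ℝ)^j) := by
      refine sPlus_le o (by positivity) ?_ hcomp1
      have := ha1 j
      positivity
    -- R m ⊆ cone S
    have hcomp2 := cone_comp o hqj (hD2 j) hc3
    have hb2 : sPlus o S (R m) ≤ 2*(1/4:ℝ)^j + q j + (2*(1/4:ℝ)^j) * q j := by
      refine sPlus_le o (by positivity) ?_ hcomp2
      have hp : (0:ℝ) ≤ r j + dist o (pick 0 (r 0)) := by
        have := hrpos j; linarith
      positivity
    have hbound : q j + 2*(1/4:ℝ)^j + q j * (2*(1/4:ℝ)^j) ≤ 5 * (1/4:ℝ)^j := by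
      nlinarith [hq'pos j]
    rw [sFun]
    apply max_le
    · linarith
    · nlinarith [hq'pos j]
  -- conclude convergence
  rw [Metric.tendsto_atTop]
  intro ε hε
  obtain ⟨j, hj⟩ := exists_pow_lt_of_lt_one (show (0:ℝ) < ε^2/5 by positivity)
    (show (1/4:ℝ) < 1 by norm_num)
  refine ⟨n j, fun m hm => ?_⟩
  have hb := hmain j m hm
  have ht : tFun o (R m) S ≤ Real.sqrt (5 * (1/4:ℝ)^j) := Real.sqrt_le_sqrt hb
  have hlt : Real.sqrt (5 * (1/4:ℝ)^j) < ε := by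
    rw [Real.sqrt_lt' hε]
    nlinarith
  have ht0 : 0 ≤ tFun o (R m) S := Real.sqrt_nonneg _
  rw [Real.dist_eq, sub_zero, abs_of_nonneg ht0]
  exact lt_of_le_of_lt ht hlt
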